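/- For every real x with 0 < x ≤ ln(3/2) one has 4e^x − e^{2x} − x − 3 > 0 and x/(4e^x − e^{2x} − x − 3) ≤ ln(3/2)/(3/4 − ln(3/2)), with equality when x = ln(3/2); moreover ln(3/2)/(3/4 − ln(3/2)) ≤ 1.18. Consequently sup{ x/(4e^x − e^{2x} − x − 3) : 0 < x ≤ ln(3/2) } = ln(3/2)/(3/4 − ln(3/2)). -/

import Mathlib

/-!
The denominator `f x = 4eˣ - e²ˣ - x - 3` satisfies `f 0 = 0` and `f'' x = 4eˣ(1 - eˣ) ≤ 0` for
`x ≥ 0`, so it is concave on `[0, ∞)` and lies above its chord from `0` to `L = ln(3/2)`: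
`f x ≥ (x / L) f L` on `[0, L]`. Since `f L = 3/4 - L > 0`, this gives both `f x > 0` and
`x / f x ≤ L / f L`, and the bound is attained at `x = L`.
-/

open Real Set

theorem ConcaveOn.smul_le_map_smul_of_map_zero {E β : Type*} [AddCommGroup E] [Module ℝ E]
    [AddCommGroup β] [PartialOrder β] [IsOrderedAddMonoid β] [Module ℝ β] {s : Set E}
    {f : E → β} (hf : ConcaveOn ℝ s f) (h0 : (0 : E) ∈ s) (hf0 : f 0 = 0) {y : E} (hy : y ∈ s)
    {t : ℝ} (ht0 : 0 ≤ t) (ht1 : t ≤ 1) : t • f y ≤ f (t • y) := by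
  simpa [hf0] using hf.2 h0 hy (sub_nonneg.2 ht1) ht0 (sub_add_cancel 1 t)

noncomputable def den (x : ℝ) : ℝ := 4 * exp x - exp (2 * x) - x - 3

lemma hasDerivAt_exp_two_mul (x : ℝ) : HasDerivAt (fun y ↦ exp (2 * y)) (2 * exp (2 * x)) x := by
  simpa [mul_comm] using ((hasDerivAt_id x).const_mul 2).exp

lemma concaveOn_den : ConcaveOn ℝ (Ici 0) den := by
  have hden' (x : ℝ) : HasDerivAt den (4 * exp x - 2 * exp (2 * x) - 1) x :=
    ((((hasDerivAt_exp x).const_mul 4).fun_sub (hasDerivAt_exp_two_mul x)).fun_sub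
      (hasDerivAt_id' x)).sub_const 3
  have hden'' (x : ℝ) : HasDerivAt (fun y ↦ 4 * exp y - 2 * exp (2 * y) - 1)
      (4 * exp x - 4 * exp (2 * x)) x :=
    ((((hasDerivAt_exp x).const_mul 4).fun_sub
      ((hasDerivAt_exp_two_mul x).const_mul 2)).sub_const 1).congr_deriv (by ring)
  refine concaveOn_of_hasDerivWithinAt2_nonpos (convex_Ici 0)
    (fun x _ ↦ (hden' x).continuousAt.continuousWithinAt)
    (fun x _ ↦ (hden' x).hasDerivWithinAt) (fun x _ ↦ (hden'' x).hasDerivWithinAt) ?_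
  intro x hx
  rw [interior_Ici] at hx
  have : exp x ≤ exp (2 * x) := exp_le_exp.2 (by linarith [mem_Ioi.1 hx])
  linarith

lemma den_log_three_div_two : den (log (3 / 2)) = 3 / 4 - log (3 / 2) := by
  have h2 : exp (2 * log (3 / 2)) = (3 / 2) ^ 2 := by
    rw [← log_rpow (by norm_num), exp_log (by norm_num)]
    norm_num
  rw [den, h2, exp_log (by norm_num)]
  ring

lemma log_three_div_two_le : log (3 / 2) ≤ 0.4059 := by
  rw [log_le_iff_le_exp (by norm_num)]
  refine le_trans ?_ (sum_le_exp_of_nonneg (by norm_num) 6)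
  simp only [Finset.sum_range_succ, Finset.sum_range_zero, Nat.factorial]
  norm_num

lemma den_log_three_div_two_pos : 0 < den (log (3 / 2)) := by
  rw [den_log_three_div_two]
  linarith [log_three_div_two_le]

lemma div_log_three_div_two_mul_le_den {x : ℝ} (hx0 : 0 ≤ x) (hxL : x ≤ log (3 / 2)) :
    x / log (3 / 2) * den (log (3 / 2)) ≤ den x := by
  have hL : 0 < log (3 / 2) := log_pos (by norm_num)
  have h := concaveOn_den.smul_le_map_smul_of_map_zero self_mem_Ici (by norm_num [den])
    (mem_Ici.2 hL.le) (div_nonneg hx0 hL.le) ((div_le_one hL).2 hxL)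
  rwa [smul_eq_mul, smul_eq_mul, div_mul_cancel₀ x hL.ne'] at h

lemma den_pos_and_div_den_le {x : ℝ} (hx0 : 0 < x) (hxL : x ≤ log (3 / 2)) :
    0 < den x ∧ x / den x ≤ log (3 / 2) / den (log (3 / 2)) := by
  have hL : 0 < log (3 / 2) := log_pos (by norm_num)
  have hchord := div_log_three_div_two_mul_le_den hx0.le hxL
  have hpos : 0 < den x :=
    (mul_pos (div_pos hx0 hL) den_log_three_div_two_pos).trans_le hchord
  refine ⟨hpos, ?_⟩
  rw [div_le_div_iff₀ hpos den_log_three_div_two_pos]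
  rw [div_mul_eq_mul_div, div_le_iff₀ hL] at hchord
  linarith

theorem stmt_18 :
    (∀ x : ℝ, 0 < x → x ≤ Real.log (3 / 2) →
      0 < 4 * Real.exp x - Real.exp (2 * x) - x - 3 ∧
      x / (4 * Real.exp x - Real.exp (2 * x) - x - 3) ≤
        Real.log (3 / 2) / (3 / 4 - Real.log (3 / 2))) ∧
    Real.log (3 / 2) /
        (4 * Real.exp (Real.log (3 / 2)) - Real.exp (2 * Real.log (3 / 2)) - Real.log (3 / 2) - 3)
      = Real.log (3 / 2) / (3 / 4 - Real.log (3 / 2)) ∧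
    Real.log (3 / 2) / (3 / 4 - Real.log (3 / 2)) ≤ 1.18 ∧
    sSup {r : ℝ | ∃ x : ℝ, 0 < x ∧ x ≤ Real.log (3 / 2) ∧
        r = x / (4 * Real.exp x - Real.exp (2 * x) - x - 3)} =
      Real.log (3 / 2) / (3 / 4 - Real.log (3 / 2)) := by
  have hbound (x : ℝ) (hx0 : 0 < x) (hxL : x ≤ log (3 / 2)) :
      0 < den x ∧ x / den x ≤ log (3 / 2) / (3 / 4 - log (3 / 2)) := by
    rw [← den_log_three_div_two]
    exact den_pos_and_div_den_le hx0 hxL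
  have hattained : log (3 / 2) / den (log (3 / 2)) = log (3 / 2) / (3 / 4 - log (3 / 2)) := by
    rw [den_log_three_div_two]
  have hL : 0 < log (3 / 2) := log_pos (by norm_num)
  refine ⟨hbound, hattained, ?_, ?_⟩
  · rw [div_le_iff₀ (by linarith [log_three_div_two_le])]
    linarith [log_three_div_two_le]
  · refine IsGreatest.csSup_eq ⟨⟨log (3 / 2), hL, le_rfl, hattained.symm⟩, ?_⟩
    rintro r ⟨x, hx0, hxL, rfl⟩
    exact (hbound x hx0 hxL).2
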